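/- arXiv:2409.19268 — 2 statements merged into one kernel-verified Lean document; each statement's English description precedes it below -/
import Mathlib

section
/- Let $S$ be a local ring with maximal ideal $m_S$, let $H$ be a finite group acting on $S$ by ring automorphisms, and put $R = S^H$. Let $L$ and $K$ be the residue fields of $S$ and $R$ respectively. If the order of the inertia subgroup $H_i = \{h \in H \mid h \equiv \mathrm{id} \bmod m_S\}$ is invertible in $R$, then the extension $L/K$ is finite Galois and the action of $H$ on $S$ induces a surjection $H \to \mathrm{Gal}(L/K)$. -/
open IsLocalRing

/-- Let `S` be a local ring with a finite group `H` acting by ring automorphisms, and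
`R = S^H` the fixed subring (also local).  If the order of the inertia subgroup
`H_i = {h : h ≡ id mod m_S}` is invertible in `R`, then the residue field extension
`L/K` is finite Galois and every `K`-automorphism of `L` is induced by some `h ∈ H`. -/
theorem residue_field_galois_of_invariants
    (S : Type*) [CommRing S] [IsLocalRing S]
    (H : Type*) [Group H] [Finite H] [MulSemiringAction H S]
    (R : Subring S) (hR : ∀ x : S, x ∈ R ↔ ∀ h : H, h • x = x)
    [IsLocalRing R] [IsLocalHom R.subtype]
    (hinert : IsUnit
      ((Nat.card {h : H // ∀ s : S, h • s - s ∈ IsLocalRing.maximalIdeal S} : ℕ) : R)) :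
    letI : Algebra (IsLocalRing.ResidueField R) (IsLocalRing.ResidueField S) :=
      (IsLocalRing.ResidueField.map R.subtype).toAlgebra
    IsGalois (IsLocalRing.ResidueField R) (IsLocalRing.ResidueField S) ∧
    FiniteDimensional (IsLocalRing.ResidueField R) (IsLocalRing.ResidueField S) ∧
    ∀ σ : IsLocalRing.ResidueField S ≃+* IsLocalRing.ResidueField S,
      (∀ x : IsLocalRing.ResidueField R,
        σ (IsLocalRing.ResidueField.map R.subtype x) =
          IsLocalRing.ResidueField.map R.subtype x) →
      ∃ h : H, ∀ s : S, σ (IsLocalRing.residue S s) = IsLocalRing.residue S (h • s) := by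
  letI : Algebra (IsLocalRing.ResidueField R) (IsLocalRing.ResidueField S) :=
    (IsLocalRing.ResidueField.map R.subtype).toAlgebra
  classical
  cases nonempty_fintype H
  set L := ResidueField S with hL
  set K := ResidueField R with hK
  let ρ : K →+* L := ResidueField.map R.subtype
  have hres : ∀ (h : H) (s : S), h • (residue S s) = residue S (h • s) := fun h s => rfl
  have resEq : ∀ a b : S, residue S a = residue S b ↔ a - b ∈ maximalIdeal S := fun a b =>
    Ideal.Quotient.eq
  -- inertia characterization
  have hAiff : ∀ h : H, (∀ s : S, h • s - s ∈ maximalIdeal S) ↔ (∀ x : L, h • x = x) := by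
    intro h
    constructor
    · intro hm x
      obtain ⟨s, rfl⟩ := residue_surjective (R := S) x
      rw [hres]
      exact (resEq _ _).mpr (hm s)
    · intro hfix s
      have h1 := hfix (residue S s)
      rw [hres] at h1
      exact (resEq _ _).mp h1
  let φ : H →* RingAut L := MulSemiringAction.toRingAut H L
  let N : Subgroup H := φ.ker
  have hNiff : ∀ h : H, h ∈ N ↔ ∀ x : L, h • x = x := by
    intro h
    constructor
    · intro hN x
      have := RingEquiv.congr_fun (MonoidHom.mem_ker.mp hN) x
      simpa [φ] using this
    · intro hfix
      refine MonoidHom.mem_ker.mpr (RingEquiv.ext fun x => ?_)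
      simpa [φ] using hfix x
  have ecard : Nat.card {h : H // ∀ s : S, h • s - s ∈ maximalIdeal S} = Nat.card N :=
    Nat.card_congr (Equiv.subtypeEquivRight fun h => (hAiff h).trans (hNiff h).symm)
  rw [ecard] at hinert
  -- the quotient group acting faithfully on L
  let Q := H ⧸ N
  letI : MulSemiringAction Q L := MulSemiringAction.compHom _ (QuotientGroup.kerLift φ)
  haveI : FaithfulSMul Q L := ⟨by
    intro q₁ q₂
    refine Quotient.inductionOn₂' q₁ q₂ (fun g₁ g₂ h ↦ QuotientGroup.eq.mpr ?_)
    refine (hNiff _).mpr fun x => ?_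
    have h2 : ∀ (g : H) (y : L), (QuotientGroup.mk g : Q) • y = g • y := fun _ _ => rfl
    have h1 := h x
    rw [h2, h2] at h1
    rw [mul_smul, ← h1, smul_smul, inv_mul_cancel, one_smul]⟩
  have hπ : ∀ (h : H) (x : L), (QuotientGroup.mk h : Q) • x = h • x := fun _ _ => rfl
  letI : Fintype Q := Fintype.ofFinite Q
  -- fiber counting
  have hcount : ∀ f : Q → L, ∑ h : H, f (QuotientGroup.mk h) = Nat.card N • ∑ q : Q, f q := by
    intro f
    rw [← Finset.sum_fiberwise' Finset.univ (QuotientGroup.mk : H → Q) f]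
    rw [Finset.smul_sum]
    refine Finset.sum_congr rfl fun q _ => ?_
    rw [Finset.sum_const]
    congr 1
    have e1 : {h : H // (QuotientGroup.mk h : Q) = q} ≃
        (N × ({q} : Set Q)) :=
      (Equiv.subtypeEquivRight (fun h => by simp)).trans
        (QuotientGroup.preimageMkEquivSubgroupProdSet N {q})
    have := Nat.card_congr e1
    rw [Nat.card_prod] at this
    simp only [Nat.card_unique, mul_one] at this
    rw [← this, Nat.card_eq_fintype_card, Fintype.card_subtype]
  -- trace is nonzero
  have hT : ∃ w : L, ∑ q : Q, q • w ≠ 0 := by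
    by_contra hc
    push_neg at hc
    have hinj : Function.Injective
        (fun q : Q => ((MulSemiringAction.toRingAut Q L q).toRingHom.toMonoidHom : L →* L)) := by
      intro q₁ q₂ hqq
      refine eq_of_smul_eq_smul (α := L) (fun x => ?_)
      exact DFunLike.congr_fun hqq x
    have li := (linearIndependent_monoidHom L L).comp _ hinj
    have hzero : (∑ q : Q, (1 : L) •
        ((fun q : Q => (((MulSemiringAction.toRingAut Q L q).toRingHom.toMonoidHom : L →* L) :
          L → L)) q)) = 0 := by
      funext x
      simp only [one_smul, Finset.sum_apply, Pi.zero_apply]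
      exact hc x
    exact one_ne_zero (Fintype.linearIndependent_iff.mp li (fun _ => (1 : L)) hzero
      (Classical.arbitrary Q))
  obtain ⟨w, hw⟩ := hT
  set d : L := ∑ q : Q, q • w with hd
  have hdfix : ∀ q₀ : Q, q₀ • d = d := by
    intro q₀
    rw [hd, Finset.smul_sum]
    exact Fintype.sum_equiv (Equiv.mulLeft q₀) _ _ fun q => by
      rw [smul_smul]; rfl
  set u : L := w * d⁻¹ with hu
  have hsum_u : ∑ q : Q, q • u = 1 := by
    have hstep : ∀ q : Q, q • u = (q • w) * d⁻¹ := by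
      intro q
      rw [hu, smul_mul']
      congr 1
      have : q • d⁻¹ = (q • d)⁻¹ := map_inv₀ (MulSemiringAction.toRingAut Q L q) d
      rw [this, hdfix]
    rw [Finset.sum_congr rfl (fun q _ => hstep q), ← Finset.sum_mul, ← hd,
      mul_inv_cancel₀ hw]
  have hHu : ∑ h : H, h • u = ((Nat.card N : ℕ) : L) := by
    have h1 := hcount (fun q => q • u)
    simp only [hπ] at h1
    rw [h1, hsum_u, nsmul_eq_mul, mul_one]
  obtain ⟨cu, hcu⟩ := hinert
  -- the key surjectivity lemma
  have keyB : ∀ x : L, (∀ h : H, h • x = x) → ∃ r : R, residue S (r : S) = x := by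
    intro x hx
    obtain ⟨s₀, hs₀⟩ := residue_surjective (R := S) x
    obtain ⟨v, hv⟩ := residue_surjective (R := S) u
    set r₀ : S := ∑ h : H, h • (s₀ * v) with hr₀
    have hr₀R : r₀ ∈ R := (hR r₀).mpr (by
      intro h₀
      rw [hr₀, Finset.smul_sum]
      exact Fintype.sum_equiv (Equiv.mulLeft h₀) _ _ fun h => by
        rw [smul_smul]; rfl)
    have hres_r₀ : residue S r₀ = x * ((Nat.card N : ℕ) : L) := by
      rw [hr₀, map_sum]
      have hterm : ∀ h : H, residue S (h • (s₀ * v)) = x * (h • u) := by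
        intro h
        rw [← hres, map_mul, hs₀, hv, smul_mul', hx h]
      rw [Finset.sum_congr rfl fun h _ => hterm h, ← Finset.mul_sum, hHu]
    refine ⟨((cu⁻¹ : Rˣ) : R) * ⟨r₀, hr₀R⟩, ?_⟩
    have hcoe : ((((cu⁻¹ : Rˣ) : R) * ⟨r₀, hr₀R⟩ : R) : S) =
        (((cu⁻¹ : Rˣ) : R) : S) * r₀ := rfl
    rw [hcoe, map_mul, hres_r₀]
    have hcn : ((cu⁻¹ : Rˣ) : R) * ((Nat.card N : ℕ) : R) = 1 := by
      rw [← hcu, ← Units.val_mul, inv_mul_cancel, Units.val_one]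
    have h0 : ((((Nat.card N : ℕ) : R)) : S) = ((Nat.card N : ℕ) : S) := by norm_cast
    have hn : residue S ((((cu⁻¹ : Rˣ) : R)) : S) * ((Nat.card N : ℕ) : L) = 1 := by
      have h1 : ((Nat.card N : ℕ) : L) = residue S ((((Nat.card N : ℕ) : R) : S)) := by
        rw [h0, map_natCast]
      rw [h1, ← map_mul, ← Subring.coe_mul, hcn, Subring.coe_one, map_one]
    rw [mul_left_comm, hn, mul_one]
  -- elements of R are fixed
  have hfix_ρ : ∀ (y : K) (h : H), h • (ρ y) = ρ y := by
    intro y h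
    obtain ⟨r, rfl⟩ := residue_surjective (R := R) y
    have h1 : ρ (residue R r) = residue S (r : S) := rfl
    rw [h1, hres, (hR (r : S)).mp r.2 h]
  -- the fixed subfield equals the image of K
  set F : Subfield L := FixedPoints.subfield H L with hF
  have hmemF : ∀ x : L, x ∈ F ↔ ∀ h : H, h • x = x := by
    intro x
    exact (Iff.rfl : x ∈ F ↔ x ∈ MulAction.fixedPoints H L).trans
      (MulAction.mem_fixedPoints)
  have hrange : ∀ x : L, x ∈ F ↔ ∃ y : K, ρ y = x := by
    intro x
    rw [hmemF]
    constructor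
    · intro hx
      obtain ⟨r, hr⟩ := keyB x hx
      exact ⟨residue R r, hr⟩
    · rintro ⟨y, rfl⟩ h
      exact hfix_ρ y h
  let ψ' : K →+* F := ρ.codRestrict F.toSubring (fun y => (hrange (ρ y)).mpr ⟨y, rfl⟩)
  have hψ'coe : ∀ y : K, ((ψ' y : F) : L) = ρ y := fun y => rfl
  have hψ'bij : Function.Bijective ψ' := by
    constructor
    · intro a b hab
      have : ρ a = ρ b := by rw [← hψ'coe a, ← hψ'coe b, hab]
      exact RingHom.injective ρ this
    · rintro ⟨x, hx⟩
      obtain ⟨y, hy⟩ := (hrange x).mp hx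
      exact ⟨y, Subtype.ext (by rw [hψ'coe, hy])⟩
  let ψ : K ≃+* F := RingEquiv.ofBijective ψ' hψ'bij
  have hψcoe : ∀ y : K, ((ψ y : F) : L) = ρ y := fun y => rfl
  have halg : ∀ y : K, algebraMap K L y = ρ y := fun y => rfl
  have halgF : ∀ x : F, algebraMap F L x = (x : L) := fun x => rfl
  have he : (algebraMap K L).comp ((ψ.symm : F ≃+* K) : F →+* K) =
      ((RingEquiv.refl L : L ≃+* L) : L →+* L).comp (algebraMap F L) := by
    ext x
    show algebraMap K L (ψ.symm x) = RingEquiv.refl L (algebraMap F L x)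
    rw [halg, ← hψcoe (ψ.symm x), RingEquiv.apply_symm_apply]
    rfl
  haveI finDim : FiniteDimensional K L :=
    Module.Finite.of_equiv_equiv (ψ.symm : F ≃+* K) (RingEquiv.refl L) he
  haveI sep : Algebra.IsSeparable K L :=
    Algebra.IsSeparable.of_equiv_equiv (ψ.symm : F ≃+* K) (RingEquiv.refl L) he
  have hcompeq : (algebraMap K L).comp ((ψ.symm : F ≃+* K) : F →+* K) = algebraMap F L := by
    rw [he]; ext x; rfl
  haveI norm : Normal K L := by
    refine normal_iff.mpr fun x => ?_
    have hxint : IsIntegral F x := IsIntegral.of_finite F x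
    set q : Polynomial K := (minpoly F x).map ((ψ.symm : F ≃+* K) : F →+* K) with hq
    have hqmonic : q.Monic := (minpoly.monic hxint).map _
    have haeval : Polynomial.aeval x q = 0 := by
      rw [hq, Polynomial.aeval_def, Polynomial.eval₂_map, hcompeq, ← Polynomial.aeval_def,
        minpoly.aeval]
    have hqsplits : Polynomial.Splits (q.map (algebraMap K L)) := by
      rw [hq, Polynomial.map_map, hcompeq]
      exact Normal.splits inferInstance x
    refine ⟨⟨q, hqmonic, ?_⟩,
      Polynomial.Splits.of_dvd hqsplits (hqmonic.map _).ne_zero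
        (Polynomial.map_dvd _ (minpoly.dvd K x haeval))⟩
    rwa [Polynomial.aeval_def] at haeval
  haveI : IsGalois K L := ⟨⟩
  refine ⟨inferInstance, finDim, ?_⟩
  intro σ hσ
  have hσF : ∀ x : F, σ (x : L) = (x : L) := by
    rintro ⟨x, hx⟩
    obtain ⟨y, hy⟩ := (hrange x).mp hx
    subst hy
    exact hσ y
  let σ' : L ≃ₐ[F] L := AlgEquiv.ofRingEquiv (f := σ) (fun x => hσF x)
  obtain ⟨h, hh⟩ := FixedPoints.toAlgAut_surjective H L σ'
  refine ⟨h, fun s => ?_⟩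
  have hx : ∀ x : L, h • x = σ x := by
    intro x
    have := DFunLike.congr_fun hh x
    simp [σ'] at this
    exact this
  rw [← hx (residue S s)]
  exact hres h s
end

section
/- Let $q$ be an odd prime power, $\mathbb{F}_{\mathfrak{r}}$ a finite field of order $|\mathfrak{r}|$ with $|\mathfrak{r}|$ a power of $q$, and let $u \in \mathbb{F}_{\mathfrak{r}}^\times$. Define $I = \{ x + u/x \mid x \in \mathbb{F}_{\mathfrak{r}}^\times \} \subseteq \mathbb{F}_{\mathfrak{r}}$. Then $|I| = (|\mathfrak{r}|+1)/2$ if $u$ is a square in $\mathbb{F}_{\mathfrak{r}}^\times$, and $|I| = (|\mathfrak{r}|-1)/2$ if $u$ is a nonsquare. In particular, the complement $\mathbb{F}_{\mathfrak{r}} \setminus I$ is always nonempty. -/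
/-- For a finite field `F` of odd order and `u ∈ F^×`, the set
`I = {x + u/x : x ∈ F^×}` has `( |F| + 1 )/2` elements if `u` is a square and
`( |F| - 1 )/2` elements otherwise; in particular its complement is nonempty. -/
theorem card_image_add_div (F : Type*) [Field F] [Fintype F] [DecidableEq F]
    (hodd : Odd (Fintype.card F)) (u : F) (hu : u ≠ 0) :
    let I : Finset F :=
      ((Finset.univ : Finset F).filter (fun x => x ≠ 0)).image (fun x => x + u / x)
    (IsSquare u → I.card = (Fintype.card F + 1) / 2) ∧
      (¬ IsSquare u → I.card = (Fintype.card F - 1) / 2) ∧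
      ∃ a : F, a ∉ I := by
  intro I
  have hmod : Fintype.card F % 2 = 1 := Nat.odd_iff.mp hodd
  have h2 : (2 : F) ≠ 0 := by
    have hchar : ringChar F ≠ 2 := by
      intro h
      have := FiniteField.even_card_iff_char_two.mp h
      omega
    intro h
    exact hchar (ringChar.eq_iff.mpr ((CharP.charP_iff_prime_eq_zero Nat.prime_two).mpr h))
  set S : Finset F := (Finset.univ : Finset F).filter (fun x => x ≠ 0) with hS
  set f : F → F := fun x => x + u / x with hf
  have hkey : ∀ x y : F, x ≠ 0 → y ≠ 0 → (f x = f y ↔ y = x ∨ y = u / x) := by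
    intro x y hx hy
    constructor
    · intro h
      have h' : (x - y) * (x * y - u) = 0 := by
        simp only [hf] at h
        field_simp at h
        linear_combination h
      rcases mul_eq_zero.mp h' with h1 | h1
      · left; exact (sub_eq_zero.mp h1).symm
      · right
        field_simp
        linear_combination h1
    · rintro (rfl | rfl)
      · rfl
      · simp only [hf]
        field_simp
        ring
  have hScard : S.card = Fintype.card F - 1 := by
    have he : S = Finset.univ.erase (0 : F) := by
      ext y; simp [hS, Finset.mem_erase]
    rw [he, Finset.card_erase_of_mem (Finset.mem_univ 0), Finset.card_univ]
  set R : Finset F := (Finset.univ : Finset F).filter (fun x => x * x = u) with hR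
  have hmain : S.card + R.card = 2 * I.card := by
    have h1 : S.card = ∑ a ∈ I, (S.filter (fun x => f x = a)).card :=
      Finset.card_eq_sum_card_fiberwise (fun x hx => Finset.mem_image_of_mem f hx)
    have h2' : R.card = ∑ a ∈ I, (R.filter (fun x => f x = a)).card := by
      apply Finset.card_eq_sum_card_fiberwise
      intro x hx
      have hx0 : x ≠ 0 := by
        intro h; rw [hR] at hx; simp [h] at hx; exact hu hx.symm
      exact Finset.mem_image_of_mem f (by simp [hS, hx0])
    rw [h1, h2', ← Finset.sum_add_distrib]
    rw [show 2 * I.card = ∑ _a ∈ I, 2 by rw [Finset.sum_const, smul_eq_mul, mul_comm]]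
    apply Finset.sum_congr rfl
    intro a ha
    obtain ⟨x, hxS, hfx⟩ := Finset.mem_image.mp ha
    have hx0 : x ≠ 0 := (Finset.mem_filter.mp hxS).2
    have hux0 : u / x ≠ 0 := div_ne_zero hu hx0
    have hfib : ∀ y : F, y ≠ 0 → (f y = a ↔ y = x ∨ y = u / x) := by
      intro y hy
      rw [← hfx, show f y = (f x : F) ↔ f x = f y from ⟨Eq.symm, Eq.symm⟩]
      exact hkey x y hx0 hy
    by_cases hxu : x * x = u
    · have hux : u / x = x := by field_simp [hxu]; rw [← hxu]; ring
      have hSf : S.filter (fun y => f y = a) = {x} := by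
        ext y
        simp only [Finset.mem_filter, Finset.mem_singleton, hS, Finset.mem_univ, true_and]
        constructor
        · rintro ⟨hy, hfy⟩
          rcases (hfib y hy).mp hfy with h | h
          · exact h
          · rw [h, hux]
        · rintro rfl
          exact ⟨hx0, (hfib _ hx0).mpr (Or.inl rfl)⟩
      have hRf : R.filter (fun y => f y = a) = {x} := by
        ext y
        simp only [Finset.mem_filter, Finset.mem_singleton, hR, Finset.mem_univ, true_and]
        constructor
        · rintro ⟨hy2, hfy⟩
          have hy0 : y ≠ 0 := by rintro rfl; simp at hy2; exact hu hy2.symm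
          rcases (hfib y hy0).mp hfy with h | h
          · exact h
          · rw [h, hux]
        · rintro rfl
          exact ⟨hxu, (hfib _ hx0).mpr (Or.inl rfl)⟩
      rw [hSf, hRf]; simp
    · have hne : x ≠ u / x := by
        intro h
        apply hxu
        field_simp at h
        linear_combination h
      have hSf : S.filter (fun y => f y = a) = {x, u / x} := by
        ext y
        simp only [Finset.mem_filter, Finset.mem_insert, Finset.mem_singleton, hS,
          Finset.mem_univ, true_and]
        constructor
        · rintro ⟨hy, hfy⟩
          exact (hfib y hy).mp hfy
        · rintro (rfl | rfl)
          · exact ⟨hx0, (hfib _ hx0).mpr (Or.inl rfl)⟩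
          · exact ⟨hux0, (hfib _ hux0).mpr (Or.inr rfl)⟩
      have hRf : R.filter (fun y => f y = a) = ∅ := by
        rw [Finset.eq_empty_iff_forall_notMem]
        intro y hy
        simp only [Finset.mem_filter, hR, Finset.mem_univ, true_and] at hy
        obtain ⟨hy2, hfy⟩ := hy
        have hy0 : y ≠ 0 := by rintro rfl; simp at hy2; exact hu hy2.symm
        rcases (hfib y hy0).mp hfy with h | h
        · rw [h] at hy2; exact hxu hy2
        · apply hxu
          rw [h] at hy2
          field_simp at hy2
          linear_combination -hy2
      rw [hSf, hRf, Finset.card_insert_of_notMem (by simpa using hne),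
        Finset.card_singleton, Finset.card_empty]
  have hq3 : 3 ≤ Fintype.card F := by
    have := Fintype.one_lt_card (α := F)
    omega
  have hRsq : IsSquare u → R.card = 2 := by
    rintro ⟨s, rfl⟩
    have hs0 : s ≠ 0 := by rintro rfl; simp at hu
    have : R = {s, -s} := by
      ext y
      simp only [hR, Finset.mem_filter, Finset.mem_univ, true_and, Finset.mem_insert,
        Finset.mem_singleton]
      exact mul_self_eq_mul_self_iff
    rw [this, Finset.card_insert_of_notMem (by
      simp only [Finset.mem_singleton]
      intro h
      apply hs0
      have : (2 : F) * s = 0 := by linear_combination h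
      rcases mul_eq_zero.mp this with h' | h'
      · exact absurd h' h2
      · exact h'), Finset.card_singleton]
  have hRns : ¬ IsSquare u → R.card = 0 := by
    intro hns
    rw [Finset.card_eq_zero, Finset.eq_empty_iff_forall_notMem]
    intro y hy
    simp only [hR, Finset.mem_filter, Finset.mem_univ, true_and] at hy
    exact hns ⟨y, hy.symm⟩
  have hlt : I.card < Fintype.card F := by
    by_cases hsq : IsSquare u
    · have := hRsq hsq; omega
    · have := hRns hsq; omega
  refine ⟨fun hsq => ?_, fun hns => ?_, ?_⟩
  · have := hRsq hsq; omega
  · have := hRns hns; omega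
  · by_contra h
    push_neg at h
    have : I = Finset.univ := Finset.eq_univ_iff_forall.mpr h
    rw [this, Finset.card_univ] at hlt
    omega
end
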